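/- arXiv:1511.06724 — 6 statements merged into one kernel-verified Lean document; each statement's English description precedes it below -/
import Mathlib

section
/- Let (C,d) be a bounded cochain complex of finite-dimensional F-vector spaces and let m ≥ 1 be an integer. Then Σ_{k∈ℤ} (2k+1) Σ_{i=0}^{2m-1} (−1)^i c_{2mk+i} = Σ_{k∈ℤ} (2k+1) Σ_{i=0}^{2m-1} (−1)^i h_{2mk+i} + 2 Σ_{k∈ℤ} b_{2mk}. (This is the weighted 2m-periodic telescoping identity established in the first chain of equalities in the proof of Proposition 4.5 of the paper.) -/
/-- For a bounded cochain complex `(C, d)` of finite-dimensional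
`F`-vector spaces and an integer `m ≥ 1`,
`Σ_k (2k+1) Σ_{i=0}^{2m-1} (-1)^i c_{2mk+i}
  = Σ_k (2k+1) Σ_{i=0}^{2m-1} (-1)^i h_{2mk+i} + 2 Σ_k b_{2mk}`. -/
theorem weighted_periodic_telescoping
    {F : Type*} [Field F]
    (V : ℤ → Type*) [∀ i, AddCommGroup (V i)] [∀ i, Module F (V i)]
    [∀ i, FiniteDimensional F (V i)]
    (hbdd : {i : ℤ | Nontrivial (V i)}.Finite)
    (d : ∀ i, V i →ₗ[F] V (i + 1))
    (hdd : ∀ i (x : V i), d (i + 1) (d i x) = 0)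
    (c b h : ℤ → ℤ)
    (hc : ∀ i, c i = Module.finrank F (V i))
    (hb : ∀ i, b i = Module.finrank F (LinearMap.range (d (i - 1))))
    (hh : ∀ i, h i = (Module.finrank F (LinearMap.ker (d i)) : ℤ)
        - (Module.finrank F (LinearMap.range (d (i - 1))) : ℤ))
    (m : ℕ) (hm : 1 ≤ m) :
    ∑ᶠ k : ℤ, (2 * k + 1) *
        ∑ i ∈ Finset.range (2 * m), (-1 : ℤ) ^ i * c (2 * (m : ℤ) * k + (i : ℤ))
      = ∑ᶠ k : ℤ, (2 * k + 1) *
            ∑ i ∈ Finset.range (2 * m), (-1 : ℤ) ^ i * h (2 * (m : ℤ) * k + (i : ℤ))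
        + 2 * ∑ᶠ k : ℤ, b (2 * (m : ℤ) * k) := by
  classical
  -- a bound on the support of the complex
  obtain ⟨N, hN⟩ : ∃ N : ℕ, ∀ i ∈ hbdd.toFinset, i.natAbs ≤ N :=
    ⟨(hbdd.toFinset.image Int.natAbs).sup id, fun i hi =>
      Finset.le_sup (f := id) (Finset.mem_image_of_mem _ hi)⟩
  -- triviality outside [-N, N]
  have triv : ∀ i : ℤ, ((N : ℤ) < i ∨ i < -(N : ℤ)) → Module.finrank F (V i) = 0 := by
    intro i hi
    have hiS : i ∉ hbdd.toFinset := by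
      intro hmem
      have := hN i hmem
      omega
    have : ¬ Nontrivial (V i) := by simpa [Set.Finite.mem_toFinset] using hiS
    have : Subsingleton (V i) := not_nontrivial_iff_subsingleton.mp this
    exact Module.finrank_zero_of_subsingleton
  have hc0 : ∀ i : ℤ, ((N : ℤ) < i ∨ i < -(N : ℤ)) → c i = 0 := by
    intro i hi
    rw [hc, triv i hi]
    rfl
  have hb0 : ∀ i : ℤ, ((N : ℤ) < i ∨ i < -(N : ℤ)) → b i = 0 := by
    intro i hi
    have he : i - 1 + 1 = i := by ring
    have h1 : Module.finrank F (V (i - 1 + 1)) = 0 := by rw [he]; exact triv i hi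
    have h2 := Submodule.finrank_le (LinearMap.range (d (i - 1)))
    rw [hb]
    omega
  have hh0 : ∀ i : ℤ, ((N : ℤ) < i ∨ i < -(N : ℤ)) → h i = 0 := by
    intro i hi
    have h1 := triv i hi
    have he : i - 1 + 1 = i := by ring
    have h1 : Module.finrank F (V (i - 1 + 1)) = 0 := by rw [he]; exact triv i hi
    have h1' := triv i hi
    have h2 := Submodule.finrank_le (LinearMap.range (d (i - 1)))
    have h3 := Submodule.finrank_le (LinearMap.ker (d i))
    rw [hh]
    omega
  have hm' : (1 : ℤ) ≤ (m : ℤ) := by exact_mod_cast hm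
  -- positions 2mk + i are outside [-N, N] whenever k is outside [-N, N]
  have habs : ∀ k : ℤ, ((N : ℤ) < k ∨ k < -(N : ℤ)) → ∀ i : ℕ, i < 2 * m →
      ((N : ℤ) < 2 * (m : ℤ) * k + (i : ℤ) ∨ 2 * (m : ℤ) * k + (i : ℤ) < -(N : ℤ)) := by
    intro k hk i hi
    have hi' : (i : ℤ) ≤ 2 * (m : ℤ) - 1 := by
      have : (i : ℤ) < 2 * (m : ℤ) := by exact_mod_cast hi
      omega
    have hi0 : (0 : ℤ) ≤ (i : ℤ) := Int.natCast_nonneg i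
    rcases hk with hk | hk
    · left
      have h1 : 2 * k ≤ 2 * (m : ℤ) * k := by nlinarith
      omega
    · right
      have h1 : 2 * (m : ℤ) * (k + 1) ≤ 2 * (k + 1) := by nlinarith
      have h2 : 2 * (m : ℤ) * k + (i : ℤ) ≤ 2 * (m : ℤ) * (k + 1) - 1 := by linarith
      omega
  have hb2m0 : ∀ k : ℤ, ((N : ℤ) < k ∨ k < -(N : ℤ)) → b (2 * (m : ℤ) * k) = 0 := by
    intro k hk
    have := habs k hk 0 (by omega)
    simp only [Nat.cast_zero, add_zero] at this
    exact hb0 _ this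
  -- the finsets
  set U : Finset ℤ := Finset.Icc (-(N : ℤ) - 1) ((N : ℤ) + 1) with hU
  set W : Finset ℤ := Finset.Icc (-(N : ℤ) - 1) ((N : ℤ) + 2) with hW
  have hout : ∀ k : ℤ, k ∉ U → ((N : ℤ) < k ∨ k < -(N : ℤ)) := by
    intro k hk
    simp only [hU, Finset.mem_Icc, not_and, not_le] at hk
    omega
  -- convert the finsums to finite sums over U
  have hsupc : (Function.support fun k : ℤ => (2 * k + 1) *
      ∑ i ∈ Finset.range (2 * m), (-1 : ℤ) ^ i * c (2 * (m : ℤ) * k + (i : ℤ))) ⊆ ↑U := by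
    intro k hk
    simp only [Function.mem_support] at hk
    by_contra hkU
    apply hk
    rw [Finset.sum_eq_zero, mul_zero]
    intro i hi
    rw [hc0 _ (habs k (hout k hkU) i (Finset.mem_range.mp hi)), mul_zero]
  have hsuph : (Function.support fun k : ℤ => (2 * k + 1) *
      ∑ i ∈ Finset.range (2 * m), (-1 : ℤ) ^ i * h (2 * (m : ℤ) * k + (i : ℤ))) ⊆ ↑U := by
    intro k hk
    simp only [Function.mem_support] at hk
    by_contra hkU
    apply hk
    rw [Finset.sum_eq_zero, mul_zero]
    intro i hi
    rw [hh0 _ (habs k (hout k hkU) i (Finset.mem_range.mp hi)), mul_zero]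
  have hsupb : (Function.support fun k : ℤ => b (2 * (m : ℤ) * k)) ⊆ ↑U := by
    intro k hk
    simp only [Function.mem_support] at hk
    by_contra hkU
    exact hk (hb2m0 k (hout k hkU))
  rw [finsum_eq_sum_of_support_subset _ hsupc, finsum_eq_sum_of_support_subset _ hsuph,
    finsum_eq_sum_of_support_subset _ hsupb]
  -- the rank–nullity key identity
  have keyc : ∀ n : ℤ, c n = h n + (b n + b (n + 1)) := by
    intro n
    have h1 := LinearMap.finrank_range_add_finrank_ker (d n)
    have hrangeEq : ∀ (x y : ℤ), x = y →
        Module.finrank F (LinearMap.range (d x)) = Module.finrank F (LinearMap.range (d y)) := by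
      intro x y hxy
      subst hxy
      rfl
    have h2 : b (n + 1) = Module.finrank F (LinearMap.range (d n)) := by
      rw [hb, hrangeEq (n + 1 - 1) n (by ring)]
    rw [hc, hh, h2, hb]
    omega
  -- inner telescoping
  have tel : ∀ k : ℤ,
      ∑ i ∈ Finset.range (2 * m), (-1 : ℤ) ^ i * c (2 * (m : ℤ) * k + (i : ℤ))
      = (∑ i ∈ Finset.range (2 * m), (-1 : ℤ) ^ i * h (2 * (m : ℤ) * k + (i : ℤ)))
        + (b (2 * (m : ℤ) * k) - b (2 * (m : ℤ) * (k + 1))) := by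
    intro k
    have hstep : ∀ i : ℕ, (-1 : ℤ) ^ i * c (2 * (m : ℤ) * k + (i : ℤ))
        = (-1 : ℤ) ^ i * h (2 * (m : ℤ) * k + (i : ℤ))
          + ((-1 : ℤ) ^ i * b (2 * (m : ℤ) * k + (i : ℤ))
            - (-1 : ℤ) ^ (i + 1) * b (2 * (m : ℤ) * k + ((i + 1 : ℕ) : ℤ))) := by
      intro i
      have harg : 2 * (m : ℤ) * k + (i : ℤ) + 1 = 2 * (m : ℤ) * k + ((i + 1 : ℕ) : ℤ) := by
        push_cast; ring
      rw [keyc (2 * (m : ℤ) * k + (i : ℤ)), harg, pow_succ]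
      ring
    have h2 := Finset.sum_range_sub' (fun j : ℕ => (-1 : ℤ) ^ j * b (2 * (m : ℤ) * k + (j : ℤ)))
      (2 * m)
    simp only [pow_zero, Nat.cast_zero, add_zero, one_mul] at h2
    have hpow : (-1 : ℤ) ^ (2 * m) = 1 := by
      rw [pow_mul]; norm_num
    rw [hpow, one_mul] at h2
    have harg2 : 2 * (m : ℤ) * k + ((2 * m : ℕ) : ℤ) = 2 * (m : ℤ) * (k + 1) := by
      push_cast; ring
    rw [harg2] at h2
    calc ∑ i ∈ Finset.range (2 * m), (-1 : ℤ) ^ i * c (2 * (m : ℤ) * k + (i : ℤ))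
        = ∑ i ∈ Finset.range (2 * m), ((-1 : ℤ) ^ i * h (2 * (m : ℤ) * k + (i : ℤ))
          + ((-1 : ℤ) ^ i * b (2 * (m : ℤ) * k + (i : ℤ))
            - (-1 : ℤ) ^ (i + 1) * b (2 * (m : ℤ) * k + ((i + 1 : ℕ) : ℤ)))) :=
          Finset.sum_congr rfl fun i _ => hstep i
      _ = (∑ i ∈ Finset.range (2 * m), (-1 : ℤ) ^ i * h (2 * (m : ℤ) * k + (i : ℤ)))
          + ∑ i ∈ Finset.range (2 * m), ((-1 : ℤ) ^ i * b (2 * (m : ℤ) * k + (i : ℤ))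
            - (-1 : ℤ) ^ (i + 1) * b (2 * (m : ℤ) * k + ((i + 1 : ℕ) : ℤ))) :=
          Finset.sum_add_distrib
      _ = _ := by rw [h2]
  rw [show (∑ k ∈ U, (2 * k + 1) *
        ∑ i ∈ Finset.range (2 * m), (-1 : ℤ) ^ i * c (2 * (m : ℤ) * k + (i : ℤ)))
      = ∑ k ∈ U, ((2 * k + 1) *
          (∑ i ∈ Finset.range (2 * m), (-1 : ℤ) ^ i * h (2 * (m : ℤ) * k + (i : ℤ)))
        + ((2 * k + 1) * b (2 * (m : ℤ) * k) - (2 * k + 1) * b (2 * (m : ℤ) * (k + 1)))) from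
      Finset.sum_congr rfl fun k _ => by rw [tel k]; ring]
  rw [Finset.sum_add_distrib]
  congr 1
  rw [Finset.sum_sub_distrib]
  -- reindex the shifted sum
  have hre : ∑ k ∈ U, (2 * k + 1) * b (2 * (m : ℤ) * (k + 1))
      = ∑ j ∈ Finset.Icc (-(N : ℤ)) ((N : ℤ) + 2), (2 * j - 1) * b (2 * (m : ℤ) * j) := by
    have hmap : Finset.Icc (-(N : ℤ)) ((N : ℤ) + 2) = U.map (addRightEmbedding (1 : ℤ)) := by
      rw [hU, Finset.map_add_right_Icc]
      congr 1 <;> ring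
    rw [hmap, Finset.sum_map]
    apply Finset.sum_congr rfl
    intro k _
    simp only [addRightEmbedding_apply]
    ring
  rw [hre]
  -- extend all the sums to W
  have hUW : U ⊆ W := by
    intro x hx
    simp only [hU, Finset.mem_Icc] at hx
    simp only [hW, Finset.mem_Icc]
    omega
  have hIW : Finset.Icc (-(N : ℤ)) ((N : ℤ) + 2) ⊆ W := by
    intro x hx
    simp only [Finset.mem_Icc] at hx
    simp only [hW, Finset.mem_Icc]
    omega
  have e1 : ∑ k ∈ U, (2 * k + 1) * b (2 * (m : ℤ) * k)
      = ∑ k ∈ W, (2 * k + 1) * b (2 * (m : ℤ) * k) := by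
    apply Finset.sum_subset hUW
    intro x hx hxU
    rw [hb2m0 x (hout x hxU), mul_zero]
  have e2 : ∑ j ∈ Finset.Icc (-(N : ℤ)) ((N : ℤ) + 2), (2 * j - 1) * b (2 * (m : ℤ) * j)
      = ∑ j ∈ W, (2 * j - 1) * b (2 * (m : ℤ) * j) := by
    apply Finset.sum_subset hIW
    intro x hx hxI
    simp only [hW, Finset.mem_Icc] at hx
    simp only [Finset.mem_Icc, not_and, not_le] at hxI
    have : ((N : ℤ) < x ∨ x < -(N : ℤ)) := by omega
    rw [hb2m0 x this, mul_zero]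
  have e3 : ∑ k ∈ U, b (2 * (m : ℤ) * k) = ∑ k ∈ W, b (2 * (m : ℤ) * k) := by
    apply Finset.sum_subset hUW
    intro x hx hxU
    exact hb2m0 x (hout x hxU)
  rw [e1, e2, e3, ← Finset.sum_sub_distrib, Finset.mul_sum]
  apply Finset.sum_congr rfl
  intro k _
  ring
end

section
/- Let h : ℤ → ℤ be a function vanishing outside a finite set, let m ≥ 1 be an integer, and let ℓ be an integer. Suppose h(i) = h(2−i) for every integer i with i ≠ 0 and i ≠ 2, and h(0) = h(2) + ℓ (the Sabloff duality relations). Then Σ_{k∈ℤ} (2k+1) Σ_{i=0}^{2m-1} (−1)^i h(2mk+i) = Σ_{k∈ℤ} (2 h(2mk) − h(2mk+1)) − ℓ. (This is the arithmetic identity, deduced from Sabloff duality, that completes the proof of Proposition 4.5 of the paper.) -/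
/-!
Write `n = 2mk + i` with `0 ≤ i < 2m`. Both sides are then sums `∑ₙ w(n) h(n)`: on the left
`w(n) = (2k+1)(-1)^i`, on the right `w(n)` is `2` for `i = 0`, `-1` for `i = 1` and `0` otherwise.
Because `2m` is even, the difference `e` of the two weights is odd under the reflection
`n ↦ 2 - n`, so reindexing by this reflection gives `2 ∑ e(n) h(n) = ∑ e(n) (h(n) - h(2 - n))`.
By duality only `n = 0` and `n = 2` survive on the right, contributing `e(0) ℓ - e(2) ℓ = -2ℓ`.
-/

namespace SabloffDuality

open Function

theorem exists_eq_mul_add (M : ℕ) [NeZero M] (n : ℤ) :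
    ∃ (k : ℤ) (i : ℕ), i < M ∧ n = M * k + i :=
  ⟨(Int.divModEquiv M n).1, (Int.divModEquiv M n).2, (Int.divModEquiv M n).2.isLt, by
    rw [mul_comm]; exact ((Int.divModEquiv M).symm_apply_apply n).symm⟩

theorem finsum_eq_finsum_sum_range {R : Type*} [AddCommMonoid R] (M : ℕ) [NeZero M]
    {g : ℤ → R} (hg : (support g).Finite) :
    ∑ᶠ n, g n = ∑ᶠ k : ℤ, ∑ i ∈ Finset.range M, g (M * k + i) := by
  have hg' : (support (g ∘ (Int.divModEquiv M).symm)).Finite := by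
    rw [support_comp_eq_preimage]
    exact hg.preimage (Int.divModEquiv M).symm.injective.injOn
  rw [← finsum_comp_equiv (Int.divModEquiv M).symm]
  refine (finsum_curry (g ∘ (Int.divModEquiv M).symm) hg').trans (finsum_congr fun k => ?_)
  rw [finsum_eq_sum_of_fintype, ← Fin.sum_univ_eq_sum_range (fun i => g (M * k + i))]
  simp [mul_comm]

theorem two_mul_finsum_mul_eq_of_antisymm {R : Type*} [CommRing R] {e h : ℤ → R} (a : ℤ)
    (he : ∀ n, e (a - n) = -e n) (hh : (support h).Finite) :
    2 * ∑ᶠ n, e n * h n = ∑ᶠ n, e n * (h n - h (a - n)) := by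
  have hh' : (support fun n => h (a - n)).Finite :=
    hh.preimage (Equiv.subLeft a).injective.injOn
  have hreflect : ∑ᶠ n, e n * h n = -∑ᶠ n, e n * h (a - n) := by
    rw [← finsum_comp_equiv (Equiv.subLeft a), ← finsum_neg_distrib]
    simp [he]
  simp only [mul_sub]
  rw [finsum_sub_distrib (hh.subset (support_mul_subset_right _ _))
    (hh'.subset (support_mul_subset_right _ _)), two_mul]
  nth_rw 2 [hreflect]
  ring

def blockwise (M : ℕ) (w : ℤ → ℕ → ℤ) (n : ℤ) : ℤ := w (n / M) (n % M).toNat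

theorem blockwise_mul_add {M : ℕ} (w : ℤ → ℕ → ℤ) (k : ℤ) {i : ℕ} (hi : i < M) :
    blockwise M w (M * k + i) = w k i := by
  have hi' : (i : ℤ) < M := by exact_mod_cast hi
  have hM : (M : ℤ) ≠ 0 := by omega
  simp only [blockwise]
  rw [add_comm, Int.add_mul_ediv_left _ _ hM, Int.ediv_eq_zero_of_lt (by omega) hi',
    Int.add_mul_emod_self_left, Int.emod_eq_of_lt (by omega) hi']
  simp

theorem finsum_blockwise_mul (M : ℕ) [NeZero M] (w : ℤ → ℕ → ℤ) {g : ℤ → ℤ}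
    (hg : (support g).Finite) :
    ∑ᶠ n, blockwise M w n * g n = ∑ᶠ k : ℤ, ∑ i ∈ Finset.range M, w k i * g (M * k + i) := by
  rw [finsum_eq_finsum_sum_range M (hg.subset (support_mul_subset_right _ _))]
  refine finsum_congr fun k => Finset.sum_congr rfl fun i hi => ?_
  rw [blockwise_mul_add w k (Finset.mem_range.1 hi)]

def alternatingWeight (k : ℤ) (i : ℕ) : ℤ := (2 * k + 1) * (-1) ^ i

theorem sum_range_alternatingWeight_mul (M : ℕ) (k : ℤ) (g : ℕ → ℤ) :
    ∑ i ∈ Finset.range M, alternatingWeight k i * g i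
      = (2 * k + 1) * ∑ i ∈ Finset.range M, (-1) ^ i * g i := by
  simp only [alternatingWeight, Finset.mul_sum, mul_assoc]

def leadingWeight (_ : ℤ) (i : ℕ) : ℤ := (if i = 0 then 2 else 0) - (if i = 1 then 1 else 0)

theorem sum_range_leadingWeight_mul {M : ℕ} (hM : 2 ≤ M) (k : ℤ) (g : ℕ → ℤ) :
    ∑ i ∈ Finset.range M, leadingWeight k i * g i = 2 * g 0 - g 1 := by
  simp [leadingWeight, sub_mul, ite_mul, Finset.sum_sub_distrib, Finset.sum_ite_eq',
    show 0 < M by omega, show 1 < M by omega]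

def dualityWeight (M : ℕ) : ℤ → ℤ := blockwise M (alternatingWeight - leadingWeight)

theorem dualityWeight_zero (M : ℕ) [NeZero M] : dualityWeight M 0 = -1 := by
  simpa [dualityWeight, alternatingWeight, leadingWeight] using
    blockwise_mul_add (M := M) (alternatingWeight - leadingWeight) 0 (i := 0) (NeZero.pos M)

theorem dualityWeight_two_sub {M : ℕ} (hM : Even M) (hM2 : 2 ≤ M) (n : ℤ) :
    dualityWeight M (2 - n) = -dualityWeight M n := by
  have : NeZero M := ⟨by omega⟩
  obtain ⟨k, i, hi, rfl⟩ := exists_eq_mul_add M n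
  have eval (k : ℤ) {i : ℕ} (hi : i < M) :
      dualityWeight M (M * k + i) = alternatingWeight k i - leadingWeight k i :=
    blockwise_mul_add _ k hi
  match i, hi with
  | 0, _ =>
    rcases hM2.eq_or_lt with rfl | hM3
    · rw [show (2 : ℤ) - (((2 : ℕ) : ℤ) * k + ((0 : ℕ) : ℤ))
          = ((2 : ℕ) : ℤ) * (1 - k) + ((0 : ℕ) : ℤ) by push_cast; ring,
        eval _ (by norm_num), eval _ (by norm_num)]
      simp [alternatingWeight, leadingWeight]
      ring
    · rw [show (2 : ℤ) - ((M : ℤ) * k + ((0 : ℕ) : ℤ)) = (M : ℤ) * (-k) + ((2 : ℕ) : ℤ) by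
          push_cast; ring,
        eval _ hM3, eval _ (by omega)]
      simp [alternatingWeight, leadingWeight]
      ring
  | 1, hi =>
    rw [show (2 : ℤ) - ((M : ℤ) * k + ((1 : ℕ) : ℤ)) = (M : ℤ) * (-k) + ((1 : ℕ) : ℤ) by
        push_cast; ring,
      eval _ hi, eval _ hi]
    simp [alternatingWeight, leadingWeight]
  | 2, hi =>
    rw [show (2 : ℤ) - ((M : ℤ) * k + ((2 : ℕ) : ℤ)) = (M : ℤ) * (-k) + ((0 : ℕ) : ℤ) by
        push_cast; ring,
      eval _ hi, eval _ (by omega)]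
    simp [alternatingWeight, leadingWeight]
    ring
  | i + 3, hi =>
    obtain ⟨j, rfl⟩ : ∃ j, M = i + j + 4 := ⟨M - i - 4, by omega⟩
    rw [show (2 : ℤ) - (((i + j + 4 : ℕ) : ℤ) * k + ((i + 3 : ℕ) : ℤ))
        = ((i + j + 4 : ℕ) : ℤ) * (-k - 1) + ((j + 3 : ℕ) : ℤ) by push_cast; ring,
      eval _ hi, eval _ (by omega)]
    have hsign : (-1 : ℤ) ^ j = (-1) ^ i := by
      obtain ⟨r, hr⟩ := hM
      rw [neg_one_pow_eq_pow_mod_two, neg_one_pow_eq_pow_mod_two (n := i)]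
      congr 1
      omega
    simp [alternatingWeight, leadingWeight, pow_add, hsign]
    ring

theorem finsum_dualityWeight_mul_eq_sub (M : ℕ) {g : ℤ → ℤ} (hg : (support g).Finite) :
    ∑ᶠ n, dualityWeight M n * g n
      = ∑ᶠ n, blockwise M alternatingWeight n * g n
        - ∑ᶠ n, blockwise M leadingWeight n * g n := by
  rw [← finsum_sub_distrib (hg.subset (support_mul_subset_right _ _))
    (hg.subset (support_mul_subset_right _ _))]
  simp only [dualityWeight, blockwise, Pi.sub_apply, sub_mul]

theorem finsum_dualityWeight_mul {M : ℕ} (hM : Even M) (hM2 : 2 ≤ M) {h : ℤ → ℤ} {ℓ : ℤ}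
    (hfin : (support h).Finite) (hdual : ∀ i : ℤ, i ≠ 0 → i ≠ 2 → h i = h (2 - i))
    (h02 : h 0 = h 2 + ℓ) :
    ∑ᶠ n, dualityWeight M n * h n = -ℓ := by
  have : NeZero M := ⟨by omega⟩
  have hanti := dualityWeight_two_sub hM hM2
  have hjump : ∀ n, h n - h (2 - n) = if n = 0 then ℓ else if n = 2 then -ℓ else 0 := by
    intro n
    split_ifs with h0 h2
    · simp [h0, h02]
    · simp [h2, h02]
    · rw [hdual n h0 h2, sub_self]
  have hweight_two : dualityWeight M 2 = 1 := by
    simpa [dualityWeight_zero] using hanti 0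
  suffices 2 * ∑ᶠ n, dualityWeight M n * h n = 2 * -ℓ by linarith
  rw [two_mul_finsum_mul_eq_of_antisymm 2 hanti hfin,
    finsum_eq_sum_of_support_subset (s := {0, 2}) _ (fun n hn => by aesop)]
  simp [hjump, hweight_two, dualityWeight_zero]
  ring

end SabloffDuality

open SabloffDuality in
/-- Let `h : ℤ → ℤ` vanish outside a finite set, `m ≥ 1`, `ℓ ∈ ℤ`.
If `h i = h (2 - i)` for all `i ∉ {0, 2}` and `h 0 = h 2 + ℓ` (Sabloff duality), then
`Σ_k (2k+1) Σ_{i=0}^{2m-1} (-1)^i h (2mk+i) = Σ_k (2 h (2mk) - h (2mk+1)) - ℓ`. -/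
theorem sabloff_duality_identity
    (h : ℤ → ℤ) (hfin : (Function.support h).Finite)
    (m : ℕ) (hm : 1 ≤ m) (ℓ : ℤ)
    (hdual : ∀ i : ℤ, i ≠ 0 → i ≠ 2 → h i = h (2 - i))
    (h02 : h 0 = h 2 + ℓ) :
    ∑ᶠ k : ℤ, (2 * k + 1) *
        ∑ i ∈ Finset.range (2 * m), (-1 : ℤ) ^ i * h (2 * (m : ℤ) * k + (i : ℤ))
      = (∑ᶠ k : ℤ, (2 * h (2 * (m : ℤ) * k) - h (2 * (m : ℤ) * k + 1))) - ℓ := by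
  have : NeZero (2 * m) := ⟨by omega⟩
  have hcast : ((2 * m : ℕ) : ℤ) = 2 * (m : ℤ) := by push_cast; rfl
  have hlhs := finsum_blockwise_mul (2 * m) alternatingWeight hfin
  have hrhs := finsum_blockwise_mul (2 * m) leadingWeight hfin
  simp only [hcast, sum_range_alternatingWeight_mul] at hlhs
  simp only [hcast, sum_range_leadingWeight_mul (show 2 ≤ 2 * m by omega), Nat.cast_zero,
    Nat.cast_one, add_zero] at hrhs
  have hdiff := finsum_dualityWeight_mul (even_two_mul m) (by omega) hfin hdual h02
  rw [finsum_dualityWeight_mul_eq_sub _ hfin, hlhs, hrhs] at hdiff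
  linarith
end

section
/- Let (C,d) be a bounded cochain complex of finite-dimensional F-vector spaces, let ℓ ≥ 0 and m ≥ 1 be integers, and suppose the cohomology dimensions satisfy Sabloff duality: h_i = h_{2−i} for every integer i with i ≠ 0 and i ≠ 2, and h_0 = h_2 + ℓ. Define r : ℤ → ℤ by r_i = c_{i+1} − ℓ if i ∈ {−1, 0} and r_i = c_{i+1} otherwise, and set χ_* := Σ_{k∈ℤ} (2k+1) Σ_{j=0}^{2m-1} (−1)^j r_{2mk+j}. Then 2 Σ_{k∈ℤ} (c_{2mk} − b_{2mk}) − ℓ − χ_* = Σ_{k∈ℤ} (2 h_{2mk} − h_{2mk+1}). (This is Proposition 4.5 of the paper: the validity of Conjecture 4.4 for ℤ-graded augmentations, stated for an abstract complex having the properties of the self-Hom complex Hom(ε,ε) — namely that dim Hom^i equals the number of Reeb chords of degree i−1 plus ℓ extra generators in each of degrees 0 and 1, and Sabloff duality for its cohomology.) -/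
private lemma tele2 (b : ℤ → ℤ) (x : ℤ) (n : ℕ) :
    ∑ j ∈ Finset.range n, (-1:ℤ)^j * (b (x + (j:ℤ) + 1) + b (x + (j:ℤ) + 2))
      = b (x + 1) - (-1:ℤ)^n * b (x + (n:ℤ) + 1) := by
  induction n with
  | zero => simp
  | succ n ih =>
    rw [Finset.sum_range_succ, ih, pow_succ]
    push_cast
    ring_nf

private lemma tele_aux (g : ℕ → ℤ) (n : ℕ) :
    ∑ j ∈ Finset.range n, (-1:ℤ)^j * (g j + g (j+1)) = g 0 - (-1:ℤ)^n * g n := by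
  induction n with
  | zero => simp
  | succ n ih => rw [Finset.sum_range_succ, ih, pow_succ]; ring

private lemma idx_aux (m K k t : ℤ) (hm : 1 ≤ m) (hK : 0 ≤ K) (hk : K + 1 ≤ |k|)
    (ht : |t| ≤ 2*m) : K ≤ |2*m*k + t| := by
  have h1 : |2*m*k| = 2*m*|k| := by
    rw [abs_mul, abs_of_nonneg (by linarith : (0:ℤ) ≤ 2*m)]
  have h2 : |2*m*k| ≤ |2*m*k + t| + |t| := by
    calc |2*m*k| = |(2*m*k + t) + (-t)| := by ring_nf
    _ ≤ |2*m*k + t| + |(-t)| := abs_add_le _ _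
    _ = |2*m*k + t| + |t| := by rw [abs_neg]
  nlinarith [abs_nonneg (2*m*k + t)]

private lemma no_hit_aux (m k j : ℤ) (hm : 1 ≤ m) (hj0 : 0 ≤ j) (hj : j < 2*m)
    (hk0 : k ≠ 0) (hk1 : k ≠ -1) : 2*m*k + j ≠ -1 ∧ 2*m*k + j ≠ 0 := by
  have hc : k ≤ -2 ∨ 1 ≤ k := by omega
  rcases hc with hc | hc
  · constructor <;> intro hEq <;> nlinarith
  · constructor <;> intro hEq <;> nlinarith

/-- Proposition 4.5 of the paper, abstractly. For a bounded cochain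
complex of finite-dimensional `F`-vector spaces whose cohomology dimensions satisfy
Sabloff duality (`h i = h (2-i)` for `i ∉ {0,2}` and `h 0 = h 2 + ℓ`), with
`r i = c (i+1) - ℓ` for `i ∈ {-1,0}` and `r i = c (i+1)` otherwise, and
`χ_* = Σ_k (2k+1) Σ_{j=0}^{2m-1} (-1)^j r (2mk+j)`, we have
`2 Σ_k (c (2mk) - b (2mk)) - ℓ - χ_* = Σ_k (2 h (2mk) - h (2mk+1))`. -/
theorem prop_4_5
    {F : Type*} [Field F]
    (V : ℤ → Type*) [∀ i, AddCommGroup (V i)] [∀ i, Module F (V i)]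
    [∀ i, FiniteDimensional F (V i)]
    (hbdd : {i : ℤ | Nontrivial (V i)}.Finite)
    (d : ∀ i, V i →ₗ[F] V (i + 1))
    (hdd : ∀ i (x : V i), d (i + 1) (d i x) = 0)
    (c b h : ℤ → ℤ)
    (hc : ∀ i, c i = Module.finrank F (V i))
    (hb : ∀ i, b i = Module.finrank F (LinearMap.range (d (i - 1))))
    (hh : ∀ i, h i = (Module.finrank F (LinearMap.ker (d i)) : ℤ)
        - (Module.finrank F (LinearMap.range (d (i - 1))) : ℤ))
    (ℓ : ℤ) (hℓ : 0 ≤ ℓ) (m : ℕ) (hm : 1 ≤ m)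
    (hdual : ∀ i : ℤ, i ≠ 0 → i ≠ 2 → h i = h (2 - i))
    (h02 : h 0 = h 2 + ℓ)
    (r : ℤ → ℤ)
    (hr : ∀ i : ℤ, r i = if i = -1 ∨ i = 0 then c (i + 1) - ℓ else c (i + 1))
    (χ : ℤ)
    (hχ : χ = ∑ᶠ k : ℤ, (2 * k + 1) *
        ∑ j ∈ Finset.range (2 * m), (-1 : ℤ) ^ j * r (2 * (m : ℤ) * k + (j : ℤ))) :
    2 * (∑ᶠ k : ℤ, (c (2 * (m : ℤ) * k) - b (2 * (m : ℤ) * k))) - ℓ - χ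
      = ∑ᶠ k : ℤ, (2 * h (2 * (m : ℤ) * k) - h (2 * (m : ℤ) * k + 1)) := by
  classical
  have hm' : (1:ℤ) ≤ (m:ℤ) := by exact_mod_cast hm
  -- b at shifted index
  have hb' : ∀ i : ℤ, b (i+1) = Module.finrank F (LinearMap.range (d i)) := by
    intro i
    have e : i + 1 - 1 = i := by ring
    have := hb (i+1)
    rwa [e] at this
  -- dimension count
  have hcomb : ∀ i : ℤ, c i = h i + b i + b (i+1) := by
    intro i
    have hrn := LinearMap.finrank_range_add_finrank_ker (d i)
    rw [hc, hh, hb, hb']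
    omega
  -- bounds
  have hble : ∀ i : ℤ, 0 ≤ b i ∧ b i ≤ c i := by
    intro i
    have h1 : Module.finrank F (LinearMap.range (d (i-1)))
        ≤ Module.finrank F (V (i-1+1)) := Submodule.finrank_le _
    have h2 : c (i-1+1) = c i := by norm_num
    constructor
    · rw [hb]; positivity
    · rw [hb, ← h2, hc]; exact_mod_cast h1
  have hker : ∀ i : ℤ, (Module.finrank F (LinearMap.ker (d i)) : ℤ) ≤ c i := by
    intro i
    rw [hc]
    exact_mod_cast Submodule.finrank_le _
  -- vanishing
  obtain ⟨N, hN2, hNz⟩ : ∃ N : ℕ, 2 ≤ N ∧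
      ∀ i : ℤ, (N:ℤ) ≤ |i| → c i = 0 ∧ b i = 0 ∧ h i = 0 := by
    refine ⟨hbdd.toFinset.sup Int.natAbs + 2, le_add_self, ?_⟩
    intro i hi
    have hci : c i = 0 := by
      rw [hc]
      norm_cast
      have hsub : Subsingleton (V i) := by
        rw [← not_nontrivial_iff_subsingleton]
        intro hmem
        have h1 : i ∈ hbdd.toFinset := hbdd.mem_toFinset.mpr hmem
        have h2 := Finset.le_sup (f := Int.natAbs) h1
        rw [Int.abs_eq_natAbs] at hi
        omega
      exact Module.finrank_zero_of_subsingleton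
    have h3 := hble i
    have h4 := hker i
    have h5 := hh i
    have h6 := hb i
    omega
  set K : ℤ := (N : ℤ) with hKdef
  have hK2 : (2:ℤ) ≤ K := by rw [hKdef]; exact_mod_cast hN2
  have hK0 : (0:ℤ) ≤ K := by linarith
  have hz : ∀ i : ℤ, K ≤ |i| → c i = 0 ∧ b i = 0 ∧ h i = 0 := fun i hi => hNz i hi
  set s : Finset ℤ := Finset.Icc (-K-1) K with hsdef
  have hnots : ∀ k : ℤ, k ∉ s → K + 1 ≤ |k| := by
    intro k hk
    rw [hsdef, Finset.mem_Icc] at hk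
    have h1 := le_abs_self k
    have h2 := neg_abs_le k
    omega
  -- conversion of the three finsums
  have hsum1 : ∑ᶠ k : ℤ, (c (2 * (m:ℤ) * k) - b (2 * (m:ℤ) * k))
      = ∑ k ∈ s, (c (2 * (m:ℤ) * k) - b (2 * (m:ℤ) * k)) := by
    apply finsum_eq_sum_of_support_subset
    intro k hk
    by_contra hks
    have hkk := hnots k hks
    have hi : K ≤ |2*(m:ℤ)*k + 0| := idx_aux (m:ℤ) K k 0 hm' hK0 hkk (by rw [abs_zero]; linarith)
    rw [add_zero] at hi
    have := hz _ hi
    simp only [Function.mem_support] at hk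
    omega
  have hsum2 : ∑ᶠ k : ℤ, (2 * h (2 * (m:ℤ) * k) - h (2 * (m:ℤ) * k + 1))
      = ∑ k ∈ s, (2 * h (2 * (m:ℤ) * k) - h (2 * (m:ℤ) * k + 1)) := by
    apply finsum_eq_sum_of_support_subset
    intro k hk
    by_contra hks
    have hkk := hnots k hks
    have hi0 : K ≤ |2*(m:ℤ)*k + 0| := idx_aux (m:ℤ) K k 0 hm' hK0 hkk (by rw [abs_zero]; linarith)
    have hi1 : K ≤ |2*(m:ℤ)*k + 1| := idx_aux (m:ℤ) K k 1 hm' hK0 hkk (by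
      rw [abs_one]; linarith)
    rw [add_zero] at hi0
    have h1 := hz _ hi0
    have h2 := hz _ hi1
    simp only [Function.mem_support] at hk
    omega
  have hsum3 : ∑ᶠ k : ℤ, ((2 * k + 1) *
        ∑ j ∈ Finset.range (2 * m), (-1 : ℤ) ^ j * r (2 * (m : ℤ) * k + (j : ℤ)))
      = ∑ k ∈ s, ((2 * k + 1) *
        ∑ j ∈ Finset.range (2 * m), (-1 : ℤ) ^ j * r (2 * (m : ℤ) * k + (j : ℤ))) := by
    apply finsum_eq_sum_of_support_subset
    intro k hk
    by_contra hks
    have hkk := hnots k hks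
    simp only [Function.mem_support] at hk
    apply hk
    have hinner : ∀ j ∈ Finset.range (2*m), (-1:ℤ)^j * r (2*(m:ℤ)*k + (j:ℤ)) = 0 := by
      intro j hj
      rw [Finset.mem_range] at hj
      have hjc : (j:ℤ) < 2*(m:ℤ) := by exact_mod_cast hj
      have hj0 : (0:ℤ) ≤ (j:ℤ) := Int.natCast_nonneg j
      have hij : K ≤ |2*(m:ℤ)*k + (j:ℤ)| :=
        idx_aux (m:ℤ) K k (j:ℤ) hm' hK0 hkk (by rw [abs_of_nonneg hj0]; linarith)
      have hne : 2*(m:ℤ)*k + (j:ℤ) ≠ -1 ∧ 2*(m:ℤ)*k + (j:ℤ) ≠ 0 := by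
        constructor <;> intro hEq <;> rw [hEq] at hij <;> simp at hij <;> omega
      have hij1 : K ≤ |2*(m:ℤ)*k + ((j:ℤ)+1)| :=
        idx_aux (m:ℤ) K k ((j:ℤ)+1) hm' hK0 hkk (by rw [abs_of_nonneg (by linarith)]; linarith)
      have hcz : c (2*(m:ℤ)*k + (j:ℤ) + 1) = 0 := by
        have := (hz _ hij1).1
        rw [← add_assoc] at this
        exact this
      rw [hr, if_neg (by push_neg; exact hne), hcz, mul_zero]
    rw [Finset.sum_eq_zero hinner, mul_zero]
  -- duality helpers
  have hodd : ∀ t : ℤ, 2*t + 1 ≠ 0 ∧ 2*t + 1 ≠ 2 := by intro t; omega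
  have heven : ∀ k : ℤ, h (2*(m:ℤ)*k + 1) = h (1 - 2*(m:ℤ)*k) := by
    intro k
    have e : 2*(m:ℤ)*k + 1 = 2*((m:ℤ)*k) + 1 := by ring
    have h1 := hdual (2*(m:ℤ)*k + 1) (by rw [e]; exact (hodd _).1) (by rw [e]; exact (hodd _).2)
    rw [h1]
    congr 1
    ring
  set G : ℤ → ℤ :=
    fun k => ∑ j ∈ Finset.range (2*m-1), (-1:ℤ)^(j+1) * h (2*(m:ℤ)*k + (j:ℤ) + 2) with hGdef
  have hsplit : ∀ k : ℤ, ∑ j ∈ Finset.range (2*m), (-1:ℤ)^j * h (2*(m:ℤ)*k + (j:ℤ) + 1)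
      = h (2*(m:ℤ)*k + 1) + G k := by
    intro k
    have e : 2*m = (2*m-1)+1 := by omega
    rw [e, Finset.sum_range_succ']
    rw [add_comm]
    congr 1
    · norm_num
    · simp only [hGdef]
      apply Finset.sum_congr rfl
      intro j hj
      have e2 : 2*(m:ℤ)*k + ((j+1 : ℕ) : ℤ) + 1 = 2*(m:ℤ)*k + (j:ℤ) + 2 := by
        push_cast; ring
      rw [e2]
  have hGrefl : ∀ k : ℤ, G (-k-1)
      = ∑ j ∈ Finset.range (2*m-1), (-1:ℤ)^(j+1) * h (-(2*(m:ℤ)*k) - (j:ℤ)) := by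
    intro k
    simp only [hGdef]
    conv_lhs => rw [← Finset.sum_range_reflect]
    apply Finset.sum_congr rfl
    intro j hj
    rw [Finset.mem_range] at hj
    have hc1 : ((2*m-1-1-j : ℕ) : ℤ) = 2*(m:ℤ) - 2 - (j:ℤ) := by omega
    have hsign : (-1:ℤ)^(2*m-1-1-j+1) = (-1:ℤ)^(j+1) := by
      have hp : (2*m-1-1-j+1) + (j+1) = 2*m := by omega
      calc (-1:ℤ)^(2*m-1-1-j+1)
          = (-1:ℤ)^(2*m-1-1-j+1) * ((-1:ℤ)^(j+1) * (-1:ℤ)^(j+1)) := by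
            rw [← pow_add]
            rw [Even.neg_one_pow ⟨j+1, rfl⟩, mul_one]
        _ = (-1:ℤ)^(2*m) * (-1:ℤ)^(j+1) := by rw [← mul_assoc, ← pow_add, hp]
        _ = (-1:ℤ)^(j+1) := by rw [Even.neg_one_pow (even_two_mul m), one_mul]
    rw [hsign]
    congr 1
    congr 1
    rw [hc1]
    ring
  have hGdual : ∀ k : ℤ, k ≠ 0 → k ≠ -1 → G (-k-1) = G k := by
    intro k hk0 hk1
    rw [hGrefl k]
    simp only [hGdef]
    apply Finset.sum_congr rfl
    intro j hj
    rw [Finset.mem_range] at hj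
    have hj' : (j:ℤ) ≤ 2*(m:ℤ) - 2 := by omega
    have hj0 : (0:ℤ) ≤ (j:ℤ) := Int.natCast_nonneg j
    have hcase : k ≤ -2 ∨ 1 ≤ k := by omega
    have hne0 : -(2*(m:ℤ)*k) - (j:ℤ) ≠ 0 := by
      rcases hcase with hcc | hcc <;> intro hEq <;> nlinarith
    have hne2 : -(2*(m:ℤ)*k) - (j:ℤ) ≠ 2 := by
      rcases hcase with hcc | hcc <;> intro hEq <;> nlinarith
    rw [hdual _ hne0 hne2]
    congr 1
    congr 1
    ring
  have hbig : s ⊆ Finset.Icc (-K-1) (K+1) := by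
    rw [hsdef]
    apply Finset.Icc_subset_Icc le_rfl (by omega)
  -- (d1)
  have hd1 : ∑ k ∈ s, (2*k+1) * h (2*(m:ℤ)*k + 1) = ∑ k ∈ s, h (2*(m:ℤ)*k + 1) := by
    have key : ∑ k ∈ Finset.Icc (-K-1) (K+1), 2*k * h (2*(m:ℤ)*k + 1) = 0 := by
      apply Finset.sum_involution (fun a _ => -a)
      · intro a ha
        have e1 : h (2*(m:ℤ)*(-a) + 1) = h (2*(m:ℤ)*a + 1) := by
          rw [heven a]
          congr 1
          ring
        rw [e1]
        ring
      · intro a ha hfa hEq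
        apply hfa
        have ha0 : a = 0 := by omega
        rw [ha0]
        ring
      · intro a ha
        omega
      · intro a ha
        rw [Finset.mem_Icc] at ha ⊢
        omega
    have expand : ∑ k ∈ s, (2*k+1) * h (2*(m:ℤ)*k + 1)
        = ∑ k ∈ s, (2*k * h (2*(m:ℤ)*k + 1) + h (2*(m:ℤ)*k + 1)) := by
      apply Finset.sum_congr rfl
      intro k _
      ring
    have hzero2 : ∑ k ∈ s, 2*k * h (2*(m:ℤ)*k + 1)
        = ∑ k ∈ Finset.Icc (-K-1) (K+1), 2*k * h (2*(m:ℤ)*k + 1) := by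
      apply Finset.sum_subset hbig
      intro x hx hxs
      have hxx : K + 1 ≤ |x| := hnots x hxs
      have hzz : h (2*(m:ℤ)*x + 1) = 0 :=
        (hz _ (idx_aux (m:ℤ) K x 1 hm' hK0 hxx (by rw [abs_one]; linarith))).2.2
      rw [hzz]
      ring
    rw [expand, Finset.sum_add_distrib, hzero2, key, zero_add]
  -- (d2)
  have h01s : ({0, -1} : Finset ℤ) ⊆ s := by
    intro x hx
    rw [hsdef, Finset.mem_Icc]
    rw [Finset.mem_insert, Finset.mem_singleton] at hx
    rcases hx with hx | hx <;> subst hx <;> omega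
  have hd2 : ∑ k ∈ s, (2*k+1) * G k = ℓ := by
    rw [← Finset.sum_sdiff h01s]
    have hpart1 : ∑ k ∈ s \ {0, -1}, (2*k+1) * G k = 0 := by
      apply Finset.sum_involution (fun a _ => -a-1)
      · intro a ha
        rw [Finset.mem_sdiff, Finset.mem_insert, Finset.mem_singleton] at ha
        push_neg at ha
        rw [hGdual a ha.2.1 ha.2.2]
        ring
      · intro a ha hfa
        omega
      · intro a ha
        omega
      · intro a ha
        rw [Finset.mem_sdiff, Finset.mem_insert, Finset.mem_singleton] at ha ⊢
        rw [hsdef, Finset.mem_Icc] at ha ⊢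
        push_neg at ha ⊢
        omega
    have hGm1 : G (-1) = ∑ j ∈ Finset.range (2*m-1), (-1:ℤ)^(j+1) * h (-(j:ℤ)) := by
      have e0 : G (-1) = G (-0-1) := by norm_num
      rw [e0, hGrefl 0]
      apply Finset.sum_congr rfl
      intro j hj
      congr 1
      congr 1
      ring
    have hpair : ∑ k ∈ ({0, -1} : Finset ℤ), (2*k+1) * G k = G 0 - G (-1) := by
      rw [Finset.sum_pair (by norm_num : (0:ℤ) ≠ -1)]
      ring
    have hG0v : G 0 - G (-1) = ℓ := by
      rw [hGm1]
      simp only [hGdef]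
      rw [← Finset.sum_sub_distrib]
      rw [Finset.sum_eq_single_of_mem 0 (Finset.mem_range.mpr (by omega))]
      · norm_num
        linarith [h02]
      · intro j hj hj0
        have hne0 : -(j:ℤ) ≠ 0 := by omega
        have hne2 : -(j:ℤ) ≠ 2 := by omega
        have e1 : h (2*(m:ℤ)*0 + (j:ℤ) + 2) = h (-(j:ℤ)) := by
          rw [hdual (-(j:ℤ)) hne0 hne2]
          congr 1
          ring
        rw [e1]
        ring
    rw [hpart1, hpair, hG0v, zero_add]
  -- Abel summation for the b-part
  have hd3 : ∑ k ∈ s, (2*k+1) * (b (2*(m:ℤ)*k + 1) - b (2*(m:ℤ)*(k+1) + 1))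
      = 2 * ∑ k ∈ s, b (2*(m:ℤ)*k + 1) := by
    have hbz : ∀ x : ℤ, K+1 ≤ |x| → b (2*(m:ℤ)*x + 1) = 0 := fun x hx =>
      (hz _ (idx_aux (m:ℤ) K x 1 hm' hK0 hx (by rw [abs_one]; linarith))).2.1
    have e1 : ∑ k ∈ s, (2*k+1) * b (2*(m:ℤ)*(k+1) + 1)
        = ∑ k ∈ Finset.Icc (-K) (K+1), (2*k-1) * b (2*(m:ℤ)*k + 1) := by
      rw [show Finset.Icc (-K) (K+1) = (Finset.Icc (-K-1) K).map (addRightEmbedding 1) from by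
        rw [Finset.map_add_right_Icc]; congr 1 <;> ring]
      rw [Finset.sum_map]
      rw [hsdef]
      apply Finset.sum_congr rfl
      intro k _
      simp only [addRightEmbedding_apply]
      ring_nf
    have e2 : ∑ k ∈ s, (2*k+1) * b (2*(m:ℤ)*k + 1)
        = ∑ k ∈ Finset.Icc (-K-1) (K+1), (2*k+1) * b (2*(m:ℤ)*k + 1) := by
      apply Finset.sum_subset hbig
      intro x hx hxs
      rw [hbz x (hnots x hxs)]
      ring
    have e3 : ∑ k ∈ Finset.Icc (-K) (K+1), (2*k-1) * b (2*(m:ℤ)*k + 1)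
        = ∑ k ∈ Finset.Icc (-K-1) (K+1), (2*k-1) * b (2*(m:ℤ)*k + 1) := by
      apply Finset.sum_subset (Finset.Icc_subset_Icc (by omega) le_rfl)
      intro x hx hxn
      rw [Finset.mem_Icc] at hx hxn
      have habs : K+1 ≤ |x| := by
        have h1 := le_abs_self x
        have h2 := neg_abs_le x
        omega
      rw [hbz x habs]
      ring
    have e4 : ∑ k ∈ Finset.Icc (-K-1) (K+1), b (2*(m:ℤ)*k + 1)
        = ∑ k ∈ s, b (2*(m:ℤ)*k + 1) := by
      symm
      apply Finset.sum_subset hbig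
      intro x hx hxs
      exact hbz x (hnots x hxs)
    have expand : ∑ k ∈ s, (2*k+1) * (b (2*(m:ℤ)*k + 1) - b (2*(m:ℤ)*(k+1) + 1))
        = ∑ k ∈ s, (2*k+1) * b (2*(m:ℤ)*k + 1)
          - ∑ k ∈ s, (2*k+1) * b (2*(m:ℤ)*(k+1) + 1) := by
      rw [← Finset.sum_sub_distrib]
      apply Finset.sum_congr rfl
      intro k _
      ring
    rw [expand, e1, e2, e3, ← Finset.sum_sub_distrib]
    have e5 : ∑ k ∈ Finset.Icc (-K-1) (K+1),
          ((2*k+1) * b (2*(m:ℤ)*k + 1) - (2*k-1) * b (2*(m:ℤ)*k + 1))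
        = ∑ k ∈ Finset.Icc (-K-1) (K+1), 2 * b (2*(m:ℤ)*k + 1) :=
      Finset.sum_congr rfl (fun k _ => by ring)
    rw [e5, ← Finset.mul_sum, e4]
  -- indicator extraction
  have hRC : ∀ k : ℤ, ∑ j ∈ Finset.range (2*m), (-1:ℤ)^j * r (2*(m:ℤ)*k + (j:ℤ))
      = (∑ j ∈ Finset.range (2*m), (-1:ℤ)^j * c (2*(m:ℤ)*k + (j:ℤ) + 1))
        - (if k = 0 then ℓ else if k = -1 then -ℓ else 0) := by
    intro k
    have hfr : ∀ j ∈ Finset.range (2*m), (-1:ℤ)^j * r (2*(m:ℤ)*k + (j:ℤ))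
        = (-1:ℤ)^j * c (2*(m:ℤ)*k + (j:ℤ) + 1)
          - (-1:ℤ)^j * (if (2*(m:ℤ)*k + (j:ℤ) = -1 ∨ 2*(m:ℤ)*k + (j:ℤ) = 0)
              then ℓ else 0) := by
      intro j hj
      rw [hr]
      split
      · ring
      · ring
    rw [Finset.sum_congr rfl hfr, Finset.sum_sub_distrib]
    congr 1
    by_cases hk0 : k = 0
    · subst hk0
      rw [if_pos rfl]
      rw [Finset.sum_eq_single_of_mem 0 (Finset.mem_range.mpr (by omega))]
      · norm_num
      · intro j hj hj0
        rw [if_neg, mul_zero]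
        push_neg
        constructor <;> omega
    · by_cases hk1 : k = -1
      · subst hk1
        rw [if_neg hk0, if_pos rfl]
        rw [Finset.sum_eq_single_of_mem (2*m-1) (Finset.mem_range.mpr (by omega))]
        · rw [if_pos (by left; omega)]
          rw [Odd.neg_one_pow ⟨m-1, by omega⟩]
          ring
        · intro j hj hjne
          rw [Finset.mem_range] at hj
          rw [if_neg, mul_zero]
          push_neg
          constructor <;> omega
      · rw [if_neg hk0, if_neg hk1]
        apply Finset.sum_eq_zero
        intro j hj
        rw [Finset.mem_range] at hj
        have hjc : (j:ℤ) < 2*(m:ℤ) := by exact_mod_cast hj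
        have hnh := no_hit_aux (m:ℤ) k (j:ℤ) hm' (Int.natCast_nonneg j) hjc hk0 hk1
        rw [if_neg (by push_neg; exact hnh), mul_zero]
  have hd0 : ∑ k ∈ s, ((2*k+1) * ∑ j ∈ Finset.range (2*m), (-1:ℤ)^j * r (2*(m:ℤ)*k + (j:ℤ)))
      = (∑ k ∈ s, (2*k+1) * ∑ j ∈ Finset.range (2*m), (-1:ℤ)^j * c (2*(m:ℤ)*k + (j:ℤ) + 1))
        - 2*ℓ := by
    have hEsum : ∑ k ∈ s, ((2*k+1) * (if k = 0 then ℓ else if k = -1 then -ℓ else 0)) = 2*ℓ := by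
      rw [← Finset.sum_subset h01s (by
        intro x hx hxn
        rw [Finset.mem_insert, Finset.mem_singleton] at hxn
        push_neg at hxn
        rw [if_neg hxn.1, if_neg hxn.2, mul_zero])]
      rw [Finset.sum_pair (by norm_num : (0:ℤ) ≠ -1)]
      norm_num
      ring
    have step : ∑ k ∈ s, ((2*k+1) * ∑ j ∈ Finset.range (2*m), (-1:ℤ)^j * r (2*(m:ℤ)*k + (j:ℤ)))
        = ∑ k ∈ s, ((2*k+1) * ∑ j ∈ Finset.range (2*m), (-1:ℤ)^j * c (2*(m:ℤ)*k + (j:ℤ) + 1)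
            - (2*k+1) * (if k = 0 then ℓ else if k = -1 then -ℓ else 0)) :=
      Finset.sum_congr rfl (fun k _ => by rw [hRC k]; ring)
    rw [step, Finset.sum_sub_distrib, hEsum]
  -- inner c-sum split
  have hd4 : ∀ k : ℤ, ∑ j ∈ Finset.range (2*m), (-1:ℤ)^j * c (2*(m:ℤ)*k + (j:ℤ) + 1)
      = (b (2*(m:ℤ)*k + 1) - b (2*(m:ℤ)*(k+1) + 1)) + (h (2*(m:ℤ)*k + 1) + G k) := by
    intro k
    have hterm : ∀ j ∈ Finset.range (2*m), (-1:ℤ)^j * c (2*(m:ℤ)*k + (j:ℤ) + 1)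
        = (-1:ℤ)^j * h (2*(m:ℤ)*k + (j:ℤ) + 1)
          + (-1:ℤ)^j * (b ((2*(m:ℤ)*k) + (j:ℤ) + 1) + b ((2*(m:ℤ)*k) + (j:ℤ) + 2)) := by
      intro j hj
      have e : b ((2*(m:ℤ)*k + (j:ℤ) + 1) + 1) = b ((2*(m:ℤ)*k) + (j:ℤ) + 2) := by
        congr 1
        ring
      rw [hcomb (2*(m:ℤ)*k + (j:ℤ) + 1), e]
      ring
    rw [Finset.sum_congr rfl hterm, Finset.sum_add_distrib, hsplit k,
      tele2 b (2*(m:ℤ)*k) (2*m)]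
    rw [Even.neg_one_pow (even_two_mul m), one_mul]
    have e1 : b (2*(m:ℤ)*k + ((2*m:ℕ):ℤ) + 1) = b (2*(m:ℤ)*(k+1) + 1) := by
      congr 1
      push_cast
      ring
    rw [e1]
    ring
  -- assembly
  rw [hsum1, hsum2, hχ, hsum3]
  have main : ∑ k ∈ s, ((2*k+1) * ∑ j ∈ Finset.range (2*m), (-1:ℤ)^j * r (2*(m:ℤ)*k + (j:ℤ)))
      = 2 * (∑ k ∈ s, b (2*(m:ℤ)*k + 1)) + (∑ k ∈ s, h (2*(m:ℤ)*k + 1)) - ℓ := by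
    rw [hd0]
    have step2 : ∑ k ∈ s, ((2*k+1) * ∑ j ∈ Finset.range (2*m), (-1:ℤ)^j * c (2*(m:ℤ)*k + (j:ℤ) + 1))
        = ∑ k ∈ s, ((2*k+1) * (b (2*(m:ℤ)*k + 1) - b (2*(m:ℤ)*(k+1) + 1))
            + ((2*k+1) * h (2*(m:ℤ)*k + 1) + (2*k+1) * G k)) :=
      Finset.sum_congr rfl (fun k _ => by rw [hd4 k]; ring)
    rw [step2, Finset.sum_add_distrib, Finset.sum_add_distrib, hd3, hd1, hd2]
    ring
  rw [main]
  have hcb : ∑ k ∈ s, (c (2*(m:ℤ)*k) - b (2*(m:ℤ)*k))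
      = ∑ k ∈ s, (h (2*(m:ℤ)*k) + b (2*(m:ℤ)*k + 1)) :=
    Finset.sum_congr rfl (fun k _ => by rw [hcomb (2*(m:ℤ)*k)]; ring)
  rw [hcb, Finset.sum_add_distrib, Finset.sum_sub_distrib]
  have hfin : ∑ k ∈ s, 2 * h (2*(m:ℤ)*k) = 2 * ∑ k ∈ s, h (2*(m:ℤ)*k) := by
    rw [Finset.mul_sum]
  rw [hfin]
  ring
end

section
/- Suppose ε : A → 𝕜 is an augmentation of (A,∂) satisfying ε ∘ σ = ε, and let k_1,…,k_n ∈ 𝕜 be arbitrary. Then there exists a unique pair (ε', K), where ε' : A → 𝕜 is a 𝕜-algebra homomorphism and K : A → 𝕜 is an (ε,ε')-derivation, such that K(x_j) = k_j for every j and ε − ε' = K ∘ ∂ as 𝕜-linear maps A → 𝕜. Moreover, this ε' is itself an augmentation, i.e. ε' ∘ ∂ = 0. (This is Lemma 2.2 of the paper, the inductive construction, via the height filtration, of the augmentation homotopic to ε with prescribed homotopy values on the generators.) -/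
/-!
An `(ε, ε')`-derivation `K` is the same thing as an algebra map `u ↦ !![ε u, K u; 0, ε' u]` into
upper triangular matrices, so on a free algebra a pair `(ε', K)` can be prescribed freely, and is
determined by, its values on the generators. On a generator `x` the condition `ε - ε' = K ∘ ∂`
reads `ε' x = ε x - K (∂ x)`, and by the height filtration the right-hand side only involves `ε'` on
earlier generators: this recursion defines `ε'` and forces uniqueness. For existence, the twisted
Leibniz rule with `ε ∘ ∂ = 0` and `ε ∘ σ = ε` shows that the `u` with `ε u - ε' u = K (∂ u)` and
`ε' (∂ u) = 0` form a subalgebra, which contains each generator because `∂ ∘ ∂ = 0`. Finally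
`ε' ∘ ∂ = ε ∘ ∂ - K ∘ ∂ ∘ ∂ = 0`.
-/

section

open Set Algebra FreeAlgebra

variable {R A : Type*} [CommRing R]

def IsTwistedDerivation [Semiring A] [Algebra R A] (ε ε' : A →ₐ[R] R) (K : A →ₗ[R] R) : Prop :=
  ∀ u v, K (u * v) = ε u * K v + K u * ε' v

namespace IsTwistedDerivation

variable [Ring A] [Algebra R A] {ε ε' : A →ₐ[R] R} {K : A →ₗ[R] R}

lemma map_algebraMap (hK : IsTwistedDerivation ε ε' K) (r : R) : K (algebraMap R A r) = 0 := by
  have hK1 : K 1 = 0 := by simpa using hK 1 1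
  rw [Algebra.algebraMap_eq_smul_one, map_smul, hK1, smul_zero]

lemma eqOn_adjoin {ε₁ ε₂ : A →ₐ[R] R} {K₁ K₂ : A →ₗ[R] R} (h₁ : IsTwistedDerivation ε ε₁ K₁)
    (h₂ : IsTwistedDerivation ε ε₂ K₂) {s : Set A} (hε : EqOn ε₁ ε₂ s) (hK : EqOn K₁ K₂ s) :
    EqOn K₁ K₂ (adjoin R s) := by
  intro u hu
  induction hu using Algebra.adjoin_induction with
  | mem x hx => exact hK hx
  | algebraMap r => rw [h₁.map_algebraMap, h₂.map_algebraMap]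
  | add x y _ _ hx hy => rw [map_add, map_add, hx, hy]
  | mul x y _ hy_mem hx hy => rw [h₁, h₂, hx, hy, AlgHom.eqOn_adjoin_iff.mpr hε hy_mem]

/-- The second conjunct absorbs the term `K (σ u) * ε' (D v)` in the expansion of
`K (D (u * v))`. -/
lemma sub_eq_comp_adjoin (hK : IsTwistedDerivation ε ε' K) {σ : A →ₐ[R] A} {D : A →ₗ[R] A}
    (hleib : ∀ u v, D (u * v) = D u * v + σ u * D v) (hεD : ∀ u, ε (D u) = 0)
    (hεσ : ∀ u, ε (σ u) = ε u) {s : Set A}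
    (hs : ∀ u ∈ s, ε u - ε' u = K (D u) ∧ ε' (D u) = 0) :
    ∀ u ∈ adjoin R s, ε u - ε' u = K (D u) ∧ ε' (D u) = 0 := by
  have hD : ∀ r, D (algebraMap R A r) = 0 := by
    have hD1 : D 1 = 0 := by simpa using hleib 1 1
    intro r
    rw [Algebra.algebraMap_eq_smul_one, map_smul, hD1, smul_zero]
  intro u hu
  induction hu using Algebra.adjoin_induction with
  | mem x hx => exact hs x hx
  | algebraMap r => simp [hD]
  | add x y _ _ hx hy =>
    simp only [map_add, ← hx.1, ← hy.1, hx.2, hy.2]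
    exact ⟨by ring, by ring⟩
  | mul x y _ _ hx hy =>
    constructor
    · rw [hleib, map_add, hK, hK, hεD, hεσ, hy.2, ← hx.1, ← hy.1, map_mul, map_mul]
      ring
    · rw [hleib, map_add, map_mul, map_mul, hx.2, hy.2, zero_mul, mul_zero, add_zero]

end IsTwistedDerivation

namespace FreeAlgebra

variable {X : Type*}

noncomputable def triangularLift (ε : FreeAlgebra R X →ₐ[R] R) (t k : X → R) :
    FreeAlgebra R X →ₐ[R] Matrix (Fin 2) (Fin 2) R :=
  lift R fun x => !![ε (ι R x), k x; 0, t x]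

noncomputable def liftDerivation (ε : FreeAlgebra R X →ₐ[R] R) (t k : X → R) :
    FreeAlgebra R X →ₗ[R] R :=
  Matrix.entryLinearMap R R 0 1 ∘ₗ (triangularLift ε t k).toLinearMap

variable (ε : FreeAlgebra R X →ₐ[R] R) (t k : X → R)

lemma triangularLift_apply (u : FreeAlgebra R X) :
    triangularLift ε t k u = !![ε u, liftDerivation ε t k u; 0, lift R t u] := by
  suffices h : triangularLift ε t k u 0 0 = ε u ∧ triangularLift ε t k u 1 0 = 0 ∧
      triangularLift ε t k u 1 1 = lift R t u by
    ext i j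
    fin_cases i <;> fin_cases j <;> simp [h, liftDerivation]
  induction u with
  | grade0 r => simp [Matrix.algebraMap_matrix_apply]
  | grade1 x => simp [triangularLift]
  | mul a b ha hb => simp [Matrix.mul_apply, ha, hb]
  | add a b ha hb => simp [ha, hb]

lemma isTwistedDerivation_liftDerivation :
    IsTwistedDerivation ε (lift R t) (liftDerivation ε t k) := by
  intro u v
  have h := congr_fun₂ (map_mul (triangularLift ε t k) u v) 0 1
  rw [triangularLift_apply, triangularLift_apply, triangularLift_apply] at h
  simpa [Matrix.mul_apply] using h

@[simp]
lemma liftDerivation_ι (x : X) : liftDerivation ε t k (ι R x) = k x := by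
  simp [liftDerivation, triangularLift]

lemma liftDerivation_eqOn_adjoin {t' : X → R} {s : Set X} (h : EqOn t t' s) :
    EqOn (liftDerivation ε t k) (liftDerivation ε t' k) (adjoin R (ι R '' s)) := by
  refine (isTwistedDerivation_liftDerivation ε t k).eqOn_adjoin
    (isTwistedDerivation_liftDerivation ε t' k) ?_ ?_
  · rintro _ ⟨x, hx, rfl⟩
    simp [h hx]
  · rintro _ ⟨x, -, rfl⟩
    simp

section WellFounded

variable [LT X] [WellFoundedLT X] (D : FreeAlgebra R X →ₗ[R] FreeAlgebra R X)

open Classical in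
/-- The values of `ε'` on the generators. The `else 0` branch is never read once `D (ι R x)` lies
in the subalgebra generated by the earlier generators (`sub_homotopicValues`). -/
noncomputable def homotopicValues : X → R :=
  WellFoundedLT.fix fun x t =>
    ε (ι R x) - liftDerivation ε (fun y => if h : y < x then t y h else 0) k (D (ι R x))

variable {D}

lemma sub_homotopicValues {x : X} (hx : D (ι R x) ∈ adjoin R (ι R '' {y | y < x})) :
    ε (ι R x) - homotopicValues ε k D x =
      liftDerivation ε (homotopicValues ε k D) k (D (ι R x)) := by
  rw [homotopicValues, WellFoundedLT.fix_eq, sub_sub_cancel]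
  refine liftDerivation_eqOn_adjoin ε _ k (fun y hy => ?_) hx
  simp [show y < x from hy]

variable (hheight : ∀ x, D (ι R x) ∈ adjoin R (ι R '' {y | y < x}))
include hheight

lemma eq_of_sub_eq_comp_ι {ε₁ ε₂ : FreeAlgebra R X →ₐ[R] R} {K₁ K₂ : FreeAlgebra R X →ₗ[R] R}
    (h₁ : IsTwistedDerivation ε ε₁ K₁) (h₂ : IsTwistedDerivation ε ε₂ K₂)
    (hK : ∀ x, K₁ (ι R x) = K₂ (ι R x))
    (hε₁ : ∀ x, ε (ι R x) - ε₁ (ι R x) = K₁ (D (ι R x)))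
    (hε₂ : ∀ x, ε (ι R x) - ε₂ (ι R x) = K₂ (D (ι R x))) :
    ε₁ = ε₂ ∧ K₁ = K₂ := by
  have hKι : EqOn K₁ K₂ (range (ι R)) := by
    rintro _ ⟨x, rfl⟩
    exact hK x
  have hει : ∀ x, ε₁ (ι R x) = ε₂ (ι R x) := by
    intro x
    induction x using WellFoundedLT.induction with
    | ind x ih =>
      have hKD : K₁ (D (ι R x)) = K₂ (D (ι R x)) := by
        refine h₁.eqOn_adjoin h₂ ?_ (hKι.mono (image_subset_range _ _)) (hheight x)
        rintro _ ⟨y, hy, rfl⟩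
        exact ih y hy
      linear_combination hε₂ x - hε₁ x - hKD
  refine ⟨by ext x; exact hει x, LinearMap.ext fun u => h₁.eqOn_adjoin h₂ ?_ hKι ?_⟩
  · rintro _ ⟨x, rfl⟩
    exact hει x
  · rw [adjoin_range_ι]
    trivial

lemma sub_lift_homotopicValues {σ : FreeAlgebra R X →ₐ[R] FreeAlgebra R X}
    (hleib : ∀ u v, D (u * v) = D u * v + σ u * D v) (hDD : ∀ u, D (D u) = 0)
    (hεD : ∀ u, ε (D u) = 0) (hεσ : ∀ u, ε (σ u) = ε u) (u : FreeAlgebra R X) :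
    ε u - lift R (homotopicValues ε k D) u =
      liftDerivation ε (homotopicValues ε k D) k (D u) := by
  have hK := isTwistedDerivation_liftDerivation ε (homotopicValues ε k D) k
  have hι : ∀ x, ε (ι R x) - lift R (homotopicValues ε k D) (ι R x) =
      liftDerivation ε (homotopicValues ε k D) k (D (ι R x)) ∧
      lift R (homotopicValues ε k D) (D (ι R x)) = 0 := by
    intro x
    induction x using WellFoundedLT.induction with
    | ind x ih =>
      have hDx := hK.sub_eq_comp_adjoin hleib hεD hεσ (by rintro _ ⟨y, hy, rfl⟩; exact ih y hy)
        _ (hheight x)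
      rw [hDD, map_zero, hεD, zero_sub, neg_eq_zero] at hDx
      exact ⟨by rw [lift_ι_apply]; exact sub_homotopicValues ε k (hheight x), hDx.1⟩
  refine (hK.sub_eq_comp_adjoin hleib hεD hεσ (s := range (ι R)) ?_ u ?_).1
  · rintro _ ⟨x, rfl⟩
    exact hι x
  · rw [adjoin_range_ι]
    trivial

end WellFounded

end FreeAlgebra

end

/-- Lemma 2.2 of the paper. Let `A` be the free algebra on
generators `x_1, …, x_n` over a field `𝕜`, `σ : A → A` an algebra map, and
`∂ : A → A` a `𝕜`-linear map satisfying the twisted Leibniz rule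
`∂(uv) = ∂(u)v + σ(u)∂(v)`, `∂ ∘ ∂ = 0` and the height-filtration condition
`∂ x_j ∈ F_{j-1}` (the subalgebra generated by the earlier generators).
If `ε : A → 𝕜` is an augmentation with `ε ∘ σ = ε`, and `k_1, …, k_n ∈ 𝕜`, then
there is a unique pair `(ε', K)` with `ε'` an algebra map, `K` an
`(ε,ε')`-derivation, `K x_j = k_j`, and `ε - ε' = K ∘ ∂`; moreover any such `ε'`
is itself an augmentation. -/
theorem construct_homotopic_augmentation
    {𝕜 : Type*} [Field 𝕜] {n : ℕ}
    (σ : FreeAlgebra 𝕜 (Fin n) →ₐ[𝕜] FreeAlgebra 𝕜 (Fin n))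
    (D : FreeAlgebra 𝕜 (Fin n) →ₗ[𝕜] FreeAlgebra 𝕜 (Fin n))
    (hleib : ∀ u v : FreeAlgebra 𝕜 (Fin n), D (u * v) = D u * v + σ u * D v)
    (hDD : ∀ u : FreeAlgebra 𝕜 (Fin n), D (D u) = 0)
    (hheight : ∀ j : Fin n,
      D (FreeAlgebra.ι 𝕜 j) ∈ Algebra.adjoin 𝕜 (FreeAlgebra.ι 𝕜 '' {k : Fin n | k < j}))
    (ε : FreeAlgebra 𝕜 (Fin n) →ₐ[𝕜] 𝕜)
    (hεD : ∀ u : FreeAlgebra 𝕜 (Fin n), ε (D u) = 0)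
    (hεσ : ∀ u : FreeAlgebra 𝕜 (Fin n), ε (σ u) = ε u)
    (k : Fin n → 𝕜) :
    (∃! p : (FreeAlgebra 𝕜 (Fin n) →ₐ[𝕜] 𝕜) × (FreeAlgebra 𝕜 (Fin n) →ₗ[𝕜] 𝕜),
        (∀ u v : FreeAlgebra 𝕜 (Fin n), p.2 (u * v) = ε u * p.2 v + p.2 u * p.1 v) ∧
        (∀ j : Fin n, p.2 (FreeAlgebra.ι 𝕜 j) = k j) ∧
        (∀ u : FreeAlgebra 𝕜 (Fin n), ε u - p.1 u = p.2 (D u))) ∧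
    (∀ p : (FreeAlgebra 𝕜 (Fin n) →ₐ[𝕜] 𝕜) × (FreeAlgebra 𝕜 (Fin n) →ₗ[𝕜] 𝕜),
        ((∀ u v : FreeAlgebra 𝕜 (Fin n), p.2 (u * v) = ε u * p.2 v + p.2 u * p.1 v) ∧
         (∀ j : Fin n, p.2 (FreeAlgebra.ι 𝕜 j) = k j) ∧
         (∀ u : FreeAlgebra 𝕜 (Fin n), ε u - p.1 u = p.2 (D u))) →
        ∀ u : FreeAlgebra 𝕜 (Fin n), p.1 (D u) = 0) := by
  set t := FreeAlgebra.homotopicValues ε k D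
  have hK := FreeAlgebra.isTwistedDerivation_liftDerivation ε t k
  have hsub := FreeAlgebra.sub_lift_homotopicValues ε k hheight hleib hDD hεD hεσ
  refine ⟨⟨(FreeAlgebra.lift 𝕜 t, FreeAlgebra.liftDerivation ε t k), ⟨hK, by simp, hsub⟩, ?_⟩, ?_⟩
  · rintro ⟨ε₁, K₁⟩ ⟨h₁, hk, hε₁⟩
    obtain ⟨rfl, rfl⟩ := FreeAlgebra.eq_of_sub_eq_comp_ι ε hheight h₁ hK (by simpa using hk)
      (fun x => hε₁ _) (fun x => hsub _)
    rfl
  · rintro ⟨ε₁, K₁⟩ ⟨-, -, hε₁⟩ u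
    simpa [hDD, hεD] using hε₁ (D u)
end

section
/- Let ε : A → 𝕜 be a 𝕜-algebra homomorphism with ε(∂ x_j) = 0 for all j, and let d_1,…,d_ℓ ∈ 𝕜 be invertible elements. Define the 𝕜-algebra homomorphism ε' : A → 𝕜 on generators by ε'(x_j) = d_{r(j)} · d_{c(j)}^{−1} · ε(x_j). Then ε'(∂ x_j) = 0 for all j; that is, ε' is again an augmentation. (This is Lemma 2.3 of the paper, rescaling an augmentation of a Legendrian link by units attached to the link components, stated abstractly using the composability property of the words appearing in the differential of a dga with link grading.) -/
/-!
Under `ε'` a composable word `x_{j_1} ⋯ x_{j_s}` picks up the factor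
`∏ₜ d_{r(j_t)} d_{c(j_t)}⁻¹`, which telescopes to `d_{r(j_1)} d_{c(j_s)}⁻¹` because
`c(j_t) = r(j_{t+1})`. Hence on the span of words composable from `r j` to `c j`, and in
particular on `∂ x_j`, the map `ε'` is the constant multiple `d_{r j} d_{c j}⁻¹ • ε`.
-/

section Telescope

variable {X L M : Type*} [CommMonoid M] (r c : X → L) (u : L → Mˣ)

theorem List.prod_map_units_mul_inv_mul_of_isChain (g : X → M) {a : X} {w : List X}
    (hw : (a :: w).IsChain (fun s t => c s = r t)) :
    ((a :: w).map fun b => (u (r b) : M) * ↑(u (c b))⁻¹ * g b).prod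
      = u (r a) * ↑(u (c ((a :: w).getLast (List.cons_ne_nil a w))))⁻¹
          * ((a :: w).map g).prod := by
  induction w generalizing a with
  | nil => simp
  | cons b w ih =>
    have hab : c a = r b := (List.isChain_cons_cons.mp hw).1
    rw [List.map_cons (a := a), List.prod_cons, ih hw.tail,
      List.getLast_cons (List.cons_ne_nil b w), hab]
    simp only [List.map_cons, List.prod_cons, mul_assoc, mul_left_comm (g a),
      Units.inv_mul_cancel_left]

end Telescope

section Rescaling

variable {X L A M F : Type*} [Monoid A] [CommMonoid M] [FunLike F A M] [MonoidHomClass F A M]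
  {r c : X → L} {u : L → Mˣ} {ι : X → A} {f f' : F}

theorem map_prod_map_eq_units_mul_inv_mul_of_isChain
    (hf' : ∀ a, f' (ι a) = (u (r a) : M) * ↑(u (c a))⁻¹ * f (ι a))
    {w : List X} (hw : w.IsChain (fun s t => c s = r t)) (hne : w ≠ []) :
    f' (w.map ι).prod
      = u (r (w.head hne)) * ↑(u (c (w.getLast hne)))⁻¹ * f (w.map ι).prod := by
  obtain ⟨a, w, rfl⟩ := List.exists_cons_of_ne_nil hne
  simp only [map_list_prod, List.map_map, Function.comp_def, hf']
  exact List.prod_map_units_mul_inv_mul_of_isChain r c u _ hw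

end Rescaling

theorem rescaled_augmentation_general
    {𝕜 : Type*} [Field 𝕜] {n ℓ : ℕ}
    (r c : Fin n → Fin ℓ)
    (D : FreeAlgebra 𝕜 (Fin n) →ₗ[𝕜] FreeAlgebra 𝕜 (Fin n))
    (hD : ∀ j : Fin n, D (FreeAlgebra.ι 𝕜 j) ∈ Submodule.span 𝕜
      { x : FreeAlgebra 𝕜 (Fin n) | ∃ w : List (Fin n),
          x = (w.map (FreeAlgebra.ι 𝕜)).prod ∧
          w.Chain' (fun s t => c s = r t) ∧
          ((w = [] ∧ r j = c j) ∨
            (∃ hw : w ≠ [], r (w.head hw) = r j ∧ c (w.getLast hw) = c j)) })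
    (ε ε' : FreeAlgebra 𝕜 (Fin n) →ₐ[𝕜] 𝕜)
    (hε : ∀ j : Fin n, ε (D (FreeAlgebra.ι 𝕜 j)) = 0)
    (d : Fin ℓ → 𝕜ˣ)
    (hε' : ∀ j : Fin n, ε' (FreeAlgebra.ι 𝕜 j)
        = (d (r j) : 𝕜) * ((d (c j))⁻¹ : 𝕜ˣ) * ε (FreeAlgebra.ι 𝕜 j)) :
    ∀ j : Fin n, ε' (D (FreeAlgebra.ι 𝕜 j)) = 0 := by
  intro j
  set k : 𝕜 := d (r j) * ((d (c j))⁻¹ : 𝕜ˣ)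
  have hk : ε' (D (FreeAlgebra.ι 𝕜 j)) = k * ε (D (FreeAlgebra.ι 𝕜 j)) := by
    refine LinearMap.eqOn_span' (f := ε'.toLinearMap) (g := k • ε.toLinearMap) ?_ (hD j)
    rintro _ ⟨w, rfl, hw, ⟨rfl, hrc⟩ | ⟨hne, hr, hc⟩⟩
    · simp [k, hrc]
    · simpa [← hr, ← hc, k] using map_prod_map_eq_units_mul_inv_mul_of_isChain hε' hw hne
  rw [hk, hε, mul_zero]

/-- Lemma 2.3 of the paper. Let `A` be the free algebra on
generators `x_1, …, x_n` over a field `𝕜`, with a link grading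
`r, c : {1,…,n} → {1,…,ℓ}`, and let `∂ : A → A` be a `𝕜`-linear map such that each
`∂ x_j` lies in the span of the words composable from `r j` to `c j`.
If `ε` is an algebra map with `ε (∂ x_j) = 0` for all `j`, and `d_1, …, d_ℓ` are
units of `𝕜`, then the algebra map `ε'` defined on generators by
`ε' x_j = d_{r j} d_{c j}⁻¹ ε x_j` also satisfies `ε' (∂ x_j) = 0` for all `j`. -/
theorem rescaled_augmentation
    {𝕜 : Type*} [Field 𝕜] {n ℓ : ℕ} (hℓ : 1 ≤ ℓ)
    (r c : Fin n → Fin ℓ)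
    (D : FreeAlgebra 𝕜 (Fin n) →ₗ[𝕜] FreeAlgebra 𝕜 (Fin n))
    (hD : ∀ j : Fin n, D (FreeAlgebra.ι 𝕜 j) ∈ Submodule.span 𝕜
      { x : FreeAlgebra 𝕜 (Fin n) | ∃ w : List (Fin n),
          x = (w.map (FreeAlgebra.ι 𝕜)).prod ∧
          w.Chain' (fun s t => c s = r t) ∧
          ((w = [] ∧ r j = c j) ∨
            (∃ hw : w ≠ [], r (w.head hw) = r j ∧ c (w.getLast hw) = c j)) })
    (ε ε' : FreeAlgebra 𝕜 (Fin n) →ₐ[𝕜] 𝕜)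
    (hε : ∀ j : Fin n, ε (D (FreeAlgebra.ι 𝕜 j)) = 0)
    (d : Fin ℓ → 𝕜ˣ)
    (hε' : ∀ j : Fin n, ε' (FreeAlgebra.ι 𝕜 j)
        = (d (r j) : 𝕜) * ((d (c j))⁻¹ : 𝕜ˣ) * ε (FreeAlgebra.ι 𝕜 j)) :
    ∀ j : Fin n, ε' (D (FreeAlgebra.ι 𝕜 j)) = 0 :=
  rescaled_augmentation_general r c D hD ε ε' hε d hε'
end

section
/- If i ≡ 0 (mod 2m), then the map ε ↦ (ε ∘ ι, ε(e_1)) is a bijection from the set of 2m-graded augmentations of (A',∂') to the product of the set of 2m-graded augmentations of (A,∂) with 𝕜; if i ≢ 0 (mod 2m), then the map ε ↦ ε ∘ ι is a bijection from the set of 2m-graded augmentations of (A',∂') to the set of 2m-graded augmentations of (A,∂). In particular, when 𝕜 is a finite field with q elements, the number of 2m-graded augmentations is multiplied by q under a stabilization in degree i ≡ 0 (mod 2m) and is unchanged under a stabilization in any other degree. (This is the paper's claim in Section 4 that stabilizing a dga multiplies the count of 2m-graded augmentations by q when the added generator has degree i ≡ 0 (mod 2m) and leaves it unchanged otherwise.)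 -/
/-- A `2m`-graded augmentation of a free algebra `A = FreeAlgebra 𝕜 X` whose
generators have degrees `deg : X → ℤ`, with differential `D` : an algebra map
`ε : A → 𝕜` with `ε ∘ D = 0` which vanishes on every generator whose degree is
not divisible by `2m` (for `m = 0`, on every generator of nonzero degree). -/
def IsTwoMGradedAug {𝕜 : Type*} [Field 𝕜] {X : Type*} (m : ℕ) (deg : X → ℤ)
    (D : FreeAlgebra 𝕜 X →ₗ[𝕜] FreeAlgebra 𝕜 X)
    (ε : FreeAlgebra 𝕜 X →ₐ[𝕜] 𝕜) : Prop :=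
  (∀ u : FreeAlgebra 𝕜 X, ε (D u) = 0) ∧
    ∀ j : X, ¬ ((2 * (m : ℤ)) ∣ deg j) → ε (FreeAlgebra.ι 𝕜 j) = 0

/-- Let `(A', ∂')` be a stabilization of `(A, ∂)` in degree `i`,
obtained by adding generators `e₁` of degree `i` and `e₂` of degree `i - 1` with
`∂' e₁ = e₂`, `∂' e₂ = 0`. If `2m ∣ i` then `ε ↦ (ε ∘ ι, ε e₁)` is a bijection
from `2m`-graded augmentations of `(A', ∂')` to (those of `(A, ∂)`) × `𝕜`;
otherwise `ε ↦ ε ∘ ι` is a bijection onto the `2m`-graded augmentations of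
`(A, ∂)`. In particular the count of `2m`-graded augmentations is multiplied by
`#𝕜` in the first case and unchanged in the second. -/
theorem stabilization_augmentation_count
    {𝕜 : Type*} [Field 𝕜] {n : ℕ} (m : ℕ)
    (deg : Fin n → ℤ) (i : ℤ)
    (deg' : (Fin n ⊕ Fin 2) → ℤ)
    (hdeg' : deg' = Sum.elim deg (fun t : Fin 2 => if t = 0 then i else i - 1))
    (D : FreeAlgebra 𝕜 (Fin n) →ₗ[𝕜] FreeAlgebra 𝕜 (Fin n))
    (D' : FreeAlgebra 𝕜 (Fin n ⊕ Fin 2) →ₗ[𝕜] FreeAlgebra 𝕜 (Fin n ⊕ Fin 2))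
    (σ' : FreeAlgebra 𝕜 (Fin n ⊕ Fin 2) →ₐ[𝕜] FreeAlgebra 𝕜 (Fin n ⊕ Fin 2))
    (ι : FreeAlgebra 𝕜 (Fin n) →ₐ[𝕜] FreeAlgebra 𝕜 (Fin n ⊕ Fin 2))
    (hι : ∀ j : Fin n, ι (FreeAlgebra.ι 𝕜 j) = FreeAlgebra.ι 𝕜 (Sum.inl j))
    (hleib : ∀ u v : FreeAlgebra 𝕜 (Fin n ⊕ Fin 2),
      D' (u * v) = D' u * v + σ' u * D' v)
    (hcomm : ∀ u : FreeAlgebra 𝕜 (Fin n), D' (ι u) = ι (D u))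
    (he1 : D' (FreeAlgebra.ι 𝕜 (Sum.inr (0 : Fin 2))) = FreeAlgebra.ι 𝕜 (Sum.inr (1 : Fin 2)))
    (he2 : D' (FreeAlgebra.ι 𝕜 (Sum.inr (1 : Fin 2))) = 0) :
    ((2 * (m : ℤ)) ∣ i →
      (∀ ε' : FreeAlgebra 𝕜 (Fin n ⊕ Fin 2) →ₐ[𝕜] 𝕜,
        IsTwoMGradedAug m deg' D' ε' → IsTwoMGradedAug m deg D (ε'.comp ι)) ∧
      (∀ ε₀ : FreeAlgebra 𝕜 (Fin n) →ₐ[𝕜] 𝕜, IsTwoMGradedAug m deg D ε₀ →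
        ∀ a : 𝕜, ∃! ε' : FreeAlgebra 𝕜 (Fin n ⊕ Fin 2) →ₐ[𝕜] 𝕜,
          IsTwoMGradedAug m deg' D' ε' ∧ ε'.comp ι = ε₀ ∧
            ε' (FreeAlgebra.ι 𝕜 (Sum.inr (0 : Fin 2))) = a) ∧
      Nat.card {ε' : FreeAlgebra 𝕜 (Fin n ⊕ Fin 2) →ₐ[𝕜] 𝕜 // IsTwoMGradedAug m deg' D' ε'}
        = Nat.card {ε : FreeAlgebra 𝕜 (Fin n) →ₐ[𝕜] 𝕜 // IsTwoMGradedAug m deg D ε}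
            * Nat.card 𝕜) ∧
    (¬ ((2 * (m : ℤ)) ∣ i) →
      (∀ ε' : FreeAlgebra 𝕜 (Fin n ⊕ Fin 2) →ₐ[𝕜] 𝕜,
        IsTwoMGradedAug m deg' D' ε' → IsTwoMGradedAug m deg D (ε'.comp ι)) ∧
      (∀ ε₀ : FreeAlgebra 𝕜 (Fin n) →ₐ[𝕜] 𝕜, IsTwoMGradedAug m deg D ε₀ →
        ∃! ε' : FreeAlgebra 𝕜 (Fin n ⊕ Fin 2) →ₐ[𝕜] 𝕜,
          IsTwoMGradedAug m deg' D' ε' ∧ ε'.comp ι = ε₀) ∧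
      Nat.card {ε' : FreeAlgebra 𝕜 (Fin n ⊕ Fin 2) →ₐ[𝕜] 𝕜 // IsTwoMGradedAug m deg' D' ε'}
        = Nat.card {ε : FreeAlgebra 𝕜 (Fin n) →ₐ[𝕜] 𝕜 // IsTwoMGradedAug m deg D ε}) := by
  -- Notation
  set E1 := FreeAlgebra.ι 𝕜 (Sum.inr (0 : Fin 2)) with hE1
  set E2 := FreeAlgebra.ι 𝕜 (Sum.inr (1 : Fin 2)) with hE2
  -- degrees of the new generators
  have hdi : deg' (Sum.inr (0 : Fin 2)) = i := by simp [hdeg']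
  have hdl : ∀ j : Fin n, deg' (Sum.inl j) = deg j := by simp [hdeg']
  -- ∂' 1 = 0
  have fin2 : ∀ t : Fin 2, t = 0 ∨ t = 1 := by decide
  have hD1 : D' (1 : FreeAlgebra 𝕜 (Fin n ⊕ Fin 2)) = 0 := by
    have h := hleib 1 1
    rw [mul_one, mul_one, show σ' 1 = 1 from map_one σ', one_mul] at h
    exact (left_eq_add.mp h)
  -- forward direction
  have fwd : ∀ ε' : FreeAlgebra 𝕜 (Fin n ⊕ Fin 2) →ₐ[𝕜] 𝕜,
      IsTwoMGradedAug m deg' D' ε' → IsTwoMGradedAug m deg D (ε'.comp ι) := by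
    rintro ε' ⟨h1, h2⟩
    constructor
    · intro u
      have : ε' (ι (D u)) = ε' (D' (ι u)) := by rw [hcomm]
      simpa [AlgHom.comp_apply] using this.trans (h1 (ι u))
    · intro j hj
      have := h2 (Sum.inl j) (by rwa [hdl])
      simpa [AlgHom.comp_apply, hι] using this
  -- the key construction/uniqueness
  have key : ∀ ε₀ : FreeAlgebra 𝕜 (Fin n) →ₐ[𝕜] 𝕜, IsTwoMGradedAug m deg D ε₀ →
      ∀ a : 𝕜, ((2 * (m : ℤ)) ∣ i ∨ a = 0) →
      ∃! ε' : FreeAlgebra 𝕜 (Fin n ⊕ Fin 2) →ₐ[𝕜] 𝕜,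
        IsTwoMGradedAug m deg' D' ε' ∧ ε'.comp ι = ε₀ ∧ ε' E1 = a := by
    intro ε₀ hε₀ a ha
    set f : (Fin n ⊕ Fin 2) → 𝕜 :=
      Sum.elim (fun j => ε₀ (FreeAlgebra.ι 𝕜 j))
        (fun t => if t = 0 then a else 0) with hf
    set ε' : FreeAlgebra 𝕜 (Fin n ⊕ Fin 2) →ₐ[𝕜] 𝕜 := FreeAlgebra.lift 𝕜 f with hε'
    have hval : ∀ x, ε' (FreeAlgebra.ι 𝕜 x) = f x := fun x => by
      simp [hε', FreeAlgebra.lift_ι_apply]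
    have hcompι : ε'.comp ι = ε₀ := by
      apply FreeAlgebra.hom_ext
      funext j
      simp [Function.comp, AlgHom.comp_apply, hι, hval, hf]
    have hE1v : ε' E1 = a := by simp [hE1, hval, hf]
    have hE2v : ε' E2 = 0 := by
      have : ((1 : Fin 2) = 0) = False := by simp
      simp [hE2, hval, hf]
    have haug : ∀ u, ε' (D' u) = 0 := by
      intro u
      induction u using FreeAlgebra.induction with
      | grade0 r =>
        rw [Algebra.algebraMap_eq_smul_one, map_smul, hD1, smul_zero, map_zero]
      | grade1 x =>
        rcases x with j | t
        · have hx : D' (FreeAlgebra.ι 𝕜 (Sum.inl j)) = ι (D (FreeAlgebra.ι 𝕜 j)) := by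
            rw [← hι, hcomm]
          rw [hx]
          have := AlgHom.congr_fun hcompι (D (FreeAlgebra.ι 𝕜 j))
          simpa [AlgHom.comp_apply] using this.trans (hε₀.1 _)
        · rcases fin2 t with rfl | rfl
          · rw [← hE1, he1]; exact hE2v
          · rw [← hE2, he2, map_zero]
      | mul u v hu hv =>
        rw [hleib, map_add, map_mul, map_mul, hu, hv, zero_mul, mul_zero, add_zero]
      | add u v hu hv =>
        rw [map_add, map_add, hu, hv, add_zero]
    have hgrad : ∀ x : Fin n ⊕ Fin 2, ¬ ((2 * (m : ℤ)) ∣ deg' x) →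
        ε' (FreeAlgebra.ι 𝕜 x) = 0 := by
      rintro (j | t) hx
      · rw [hval]; exact hε₀.2 j (by rwa [hdl] at hx)
      · rcases fin2 t with rfl | rfl
        · rw [hdi] at hx
          rcases ha with ha | ha
          · exact absurd ha hx
          · rw [← hE1, hE1v, ha]
        · rw [← hE2]; exact hE2v
    refine ⟨ε', ⟨⟨haug, hgrad⟩, hcompι, hE1v⟩, ?_⟩
    rintro ε'' ⟨⟨h1, _⟩, h2, h3⟩
    apply FreeAlgebra.hom_ext
    funext x
    simp only [Function.comp_apply]
    rcases x with j | t
    · have := AlgHom.congr_fun h2 (FreeAlgebra.ι 𝕜 j)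
      simp only [AlgHom.comp_apply, hι] at this
      simp [this, hval, hf]
    · rcases fin2 t with rfl | rfl
      · rw [← hE1, h3, hE1v]
      · have hz : ε'' E2 = 0 := by
          have := h1 E1
          rwa [he1] at this
        rw [← hE2, hz, hE2v]
  constructor
  · intro hdvd
    refine ⟨fwd, fun ε₀ h a => key ε₀ h a (Or.inl hdvd), ?_⟩
    -- bijection with the product
    have hbij : Function.Bijective
        (fun ε' : {ε' : FreeAlgebra 𝕜 (Fin n ⊕ Fin 2) →ₐ[𝕜] 𝕜 // IsTwoMGradedAug m deg' D' ε'} =>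
          ((⟨ε'.1.comp ι, fwd ε'.1 ε'.2⟩ :
              {ε : FreeAlgebra 𝕜 (Fin n) →ₐ[𝕜] 𝕜 // IsTwoMGradedAug m deg D ε}),
            ε'.1 E1)) := by
      constructor
      · rintro ⟨x, hx⟩ ⟨y, hy⟩ hxy
        simp only [Prod.mk.injEq, Subtype.mk.injEq] at hxy
        obtain ⟨h1, h2⟩ := hxy
        obtain ⟨ε'u, _, hu⟩ := key (x.comp ι) (fwd x hx) (x E1) (Or.inl hdvd)
        have hxe : x = ε'u := hu x ⟨hx, rfl, rfl⟩
        have hye : y = ε'u := hu y ⟨hy, h1.symm, h2.symm⟩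
        simp [hxe, hye]
      · rintro ⟨⟨ε₀, hε₀⟩, a⟩
        obtain ⟨ε'u, ⟨hP, hc, hv⟩, _⟩ := key ε₀ hε₀ a (Or.inl hdvd)
        exact ⟨⟨ε'u, hP⟩, by simp [hc, hv]⟩
    rw [Nat.card_congr (Equiv.ofBijective _ hbij), Nat.card_prod]
  · intro hndvd
    refine ⟨fwd, ?_, ?_⟩
    · intro ε₀ hε₀
      obtain ⟨ε'u, ⟨hP, hc, _⟩, hu⟩ := key ε₀ hε₀ 0 (Or.inr rfl)
      refine ⟨ε'u, ⟨hP, hc⟩, ?_⟩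
      rintro ε'' ⟨hP'', hc''⟩
      exact hu ε'' ⟨hP'', hc'', hP''.2 (Sum.inr 0) (by rwa [hdi])⟩
    · have hbij : Function.Bijective
          (fun ε' : {ε' : FreeAlgebra 𝕜 (Fin n ⊕ Fin 2) →ₐ[𝕜] 𝕜 // IsTwoMGradedAug m deg' D' ε'} =>
            (⟨ε'.1.comp ι, fwd ε'.1 ε'.2⟩ :
              {ε : FreeAlgebra 𝕜 (Fin n) →ₐ[𝕜] 𝕜 // IsTwoMGradedAug m deg D ε})) := by
        constructor
        · rintro ⟨x, hx⟩ ⟨y, hy⟩ hxy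
          simp only [Subtype.mk.injEq] at hxy
          obtain ⟨ε'u, _, hu⟩ := key (x.comp ι) (fwd x hx) 0 (Or.inr rfl)
          have hxe : x = ε'u := hu x ⟨hx, rfl, hx.2 (Sum.inr 0) (by rwa [hdi])⟩
          have hye : y = ε'u := hu y ⟨hy, hxy.symm, hy.2 (Sum.inr 0) (by rwa [hdi])⟩
          simp [hxe, hye]
        · rintro ⟨ε₀, hε₀⟩
          obtain ⟨ε'u, ⟨hP, hc, _⟩, _⟩ := key ε₀ hε₀ 0 (Or.inr rfl)
          exact ⟨⟨ε'u, hP⟩, by simp [hc]⟩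
      exact Nat.card_congr (Equiv.ofBijective _ hbij)
end
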